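/- arXiv:2603.21001 — 2 statements merged into one kernel-verified Lean document; each statement's English description precedes it below -/
import Mathlib

section
/- Let V be a finite-dimensional vector space over a finite field of odd characteristic, and let H be a subgroup of GL(V) such that: (i) V is an irreducible H-module; (ii) H is metacyclic, i.e., H has a normal cyclic subgroup C with H/C cyclic; (iii) the Sylow 2-subgroups of H are elementary abelian of order 4; (iv) H has no proper normal subgroup of odd index. Then the affine permutation group G = V ⋊ H acting on V is 2-moderate. -/
open Pointwise

/-- The `p`-part of a natural number `n`: the largest power of `p` dividing `n`. -/
def pPart (p n : ℕ) : ℕ := p ^ n.factorization p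

/-- A group `G` acting on `Ω` is `p`-moderate if there is a subset `Δ` of `Ω` whose
setwise stabilizer `S` satisfies `1 < |S|_p < |G|_p`. -/
def IsPModerate (p : ℕ) (G : Type*) [Group G] (Ω : Type*) [MulAction G Ω] : Prop :=
  ∃ Δ : Set Ω,
    1 < pPart p (Nat.card (MulAction.stabilizer G Δ)) ∧
      pPart p (Nat.card (MulAction.stabilizer G Δ)) < pPart p (Nat.card G)

/-- The affine permutation group `V ⋊ H` on `V` determined by a subgroup `H` of `GL(V)`:
all permutations of `V` of the form `x ↦ h(x) + v` with `h ∈ H`, `v ∈ V`. -/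
def affPerm {F V : Type*} [Field F] [AddCommGroup V] [Module F V]
    (H : Subgroup (V →ₗ[F] V)ˣ) : Subgroup (Equiv.Perm V) where
  carrier := {σ | ∃ h ∈ H, ∃ v : V, ∀ x : V, σ x = (h : V →ₗ[F] V) x + v}
  one_mem' := ⟨1, H.one_mem, 0, fun x => by simp⟩
  mul_mem' := by
    rintro σ τ ⟨h, hH, v, hσ⟩ ⟨h', h'H, v', hτ⟩
    refine ⟨h * h', H.mul_mem hH h'H, (h : V →ₗ[F] V) v' + v, fun x => ?_⟩
    simp only [Equiv.Perm.mul_apply, hσ, hτ, Units.val_mul, Module.End.mul_apply, map_add]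
    abel
  inv_mem' := by
    rintro σ ⟨h, hH, v, hσ⟩
    refine ⟨h⁻¹, H.inv_mem hH, -(((h⁻¹ : (V →ₗ[F] V)ˣ) : V →ₗ[F] V) v), fun y => ?_⟩
    have key : σ (((h⁻¹ : (V →ₗ[F] V)ˣ) : V →ₗ[F] V) y +
        -(((h⁻¹ : (V →ₗ[F] V)ˣ) : V →ₗ[F] V) v)) = y := by
      rw [hσ, map_add, map_neg, ← Module.End.mul_apply, ← Module.End.mul_apply,
        ← Units.val_mul, mul_inv_cancel]
      simp
    calc σ⁻¹ y = σ⁻¹ (σ (((h⁻¹ : (V →ₗ[F] V)ˣ) : V →ₗ[F] V) y +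
        -(((h⁻¹ : (V →ₗ[F] V)ˣ) : V →ₗ[F] V) v))) := by rw [key]
    _ = _ := by simp

/-!
Sylow 2-subgroups of `H` are Klein four-groups, so they are not cyclic and (as `H/C` is cyclic)
one of their involutions `z` lies in the cyclic normal subgroup `C`; being the unique involution
of `C` it is central, hence acts as `-1` on the irreducible module `V`, and lies in every Sylow
2-subgroup. Another involution `t` of a Sylow 2-subgroup has eigenvectors `a` and `u` for `1`
and `-1`, and `Δ = {0, a, u, -u}` is stabilized by `t`. If `4` divided the order of the
stabilizer of `Δ`, then, translations having odd order, the linear parts of a subgroup of order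
`4` of the stabilizer would form a Sylow 2-subgroup of `H`, so some `x ↦ -x + w` would preserve
`Δ`, which it does not. Hence the stabilizer has 2-part `2`, while `4` divides `|V ⋊ H|`.
-/

theorem isPModerate_of_dvd {p k : ℕ} (hp : p.Prime) {G Ω : Type*} [Group G] [Finite G]
    [MulAction G Ω] (Δ : Set Ω) (hdvd : p ∣ Nat.card (MulAction.stabilizer G Δ))
    (hndvd : ¬ p ^ k ∣ Nat.card (MulAction.stabilizer G Δ)) (hG : p ^ k ∣ Nat.card G) :
    IsPModerate p G Ω := by
  have hS : Nat.card (MulAction.stabilizer G Δ) ≠ 0 := Nat.card_pos.ne'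
  refine ⟨Δ, Nat.one_lt_pow (hp.factorization_pos_of_dvd hS hdvd).ne' hp.one_lt,
    Nat.pow_lt_pow_right hp.one_lt ?_⟩
  rw [hp.pow_dvd_iff_le_factorization hS] at hndvd
  rw [hp.pow_dvd_iff_le_factorization Nat.card_pos.ne'] at hG
  omega

section GroupTheory

variable {G : Type*} [Group G]

theorem QuotientGroup.isCyclic_of_forall_exists_zpow {C : Subgroup G} [C.Normal] (g : G)
    (hg : ∀ x : G, ∃ n : ℤ, x⁻¹ * g ^ n ∈ C) : IsCyclic (G ⧸ C) := by
  refine ⟨⟨g, fun x => ?_⟩⟩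
  obtain ⟨y, rfl⟩ := QuotientGroup.mk_surjective x
  obtain ⟨n, hn⟩ := hg y
  exact ⟨n, show (g : G ⧸ C) ^ n = y by
    rw [← QuotientGroup.mk_zpow]; exact (QuotientGroup.eq.mpr hn).symm⟩

theorem exists_ne_one_mem_of_isCyclic_quotient {C : Subgroup G} [C.Normal] [IsCyclic (G ⧸ C)]
    {P : Subgroup G} (hP : ¬ IsCyclic P) : ∃ x ∈ P, x ∈ C ∧ x ≠ 1 := by
  by_contra! h
  refine hP (isCyclic_of_injective ((QuotientGroup.mk' C).comp P.subtype)
    ((injective_iff_map_eq_one _).mpr fun x hx => Subtype.ext ?_))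
  exact h x x.2 ((QuotientGroup.eq_one_iff _).mp hx)

theorem IsCyclic.eq_of_orderOf_eq_two [Finite G] [IsCyclic G] {x y : G} (hx : orderOf x = 2)
    (hy : orderOf y = 2) : x = y := by
  classical
  have := Fintype.ofFinite G
  have hcard := IsCyclic.card_orderOf_eq_totient (α := G) (d := 2)
    (Nat.card_eq_fintype_card (α := G) ▸ hx ▸ orderOf_dvd_natCard x)
  exact Finset.card_le_one.mp (hcard.trans Nat.totient_two).le x (by simpa using hx) y
    (by simpa using hy)

theorem Subgroup.mem_center_of_normal_of_isCyclic {C : Subgroup G} [C.Normal] [IsCyclic C]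
    [Finite C] {z : G} (hzC : z ∈ C) (hz : orderOf z = 2) : z ∈ Subgroup.center G := by
  refine Subgroup.mem_center_iff.mpr fun g => ?_
  have hconj : orderOf (g * z * g⁻¹) = 2 := by
    rw [← MulAut.conj_apply, MulEquiv.orderOf_eq, hz]
  have := IsCyclic.eq_of_orderOf_eq_two
    (x := (⟨g * z * g⁻¹, ‹C.Normal›.conj_mem z hzC g⟩ : C)) (y := ⟨z, hzC⟩)
    (by rwa [Subgroup.orderOf_mk]) (by rwa [Subgroup.orderOf_mk])
  exact mul_inv_eq_iff_eq_mul.mp (congrArg Subtype.val this)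

theorem not_isCyclic_of_forall_sq_eq_one [Finite G] (hG : 2 < Nat.card G)
    (hsq : ∀ x : G, x ^ 2 = 1) : ¬ IsCyclic G := fun _ => by
  have := Nat.le_of_dvd two_pos
    (IsCyclic.exponent_eq_card (α := G) ▸ Monoid.exponent_dvd_of_forall_pow_eq_one hsq)
  omega

theorem exists_mem_center_orderOf_eq_two [Finite G] {C : Subgroup G} [C.Normal] [IsCyclic C]
    [IsCyclic (G ⧸ C)] {P : Subgroup G} (hP : 2 < Nat.card P) (hsq : ∀ x : P, x ^ 2 = 1) :
    ∃ z ∈ P, z ∈ Subgroup.center G ∧ orderOf z = 2 := by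
  obtain ⟨z, hzP, hzC, hz1⟩ :=
    exists_ne_one_mem_of_isCyclic_quotient (C := C) (not_isCyclic_of_forall_sq_eq_one hP hsq)
  have hz2 := orderOf_eq_prime (congrArg Subtype.val (hsq ⟨z, hzP⟩)) hz1
  exact ⟨z, hzP, Subgroup.mem_center_of_normal_of_isCyclic hzC hz2, hz2⟩

theorem Subgroup.exists_mem_ne_ne {P : Subgroup G} (hP : 2 < Nat.card P) (x y : G) :
    ∃ t ∈ P, t ≠ x ∧ t ≠ y := by
  have hcard : ({x, y} : Set G).ncard < (P : Set G).ncard := by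
    rw [← Nat.card_coe_set_eq]
    exact (Set.ncard_insert_le x {y}).trans_lt (by rwa [Set.ncard_singleton])
  obtain ⟨t, htP, ht⟩ := Set.exists_mem_notMem_of_ncard_lt_ncard hcard
  simp only [Set.mem_insert_iff, Set.mem_singleton_iff, not_or] at ht
  exact ⟨t, htP, ht⟩

theorem Sylow.mem_of_mem_center {p : ℕ} [Fact p.Prime] {z : G} (hz : z ∈ Subgroup.center G)
    (hzp : orderOf z = p) (P : Sylow p G) : z ∈ P := by
  have : (Subgroup.zpowers z).Normal := ⟨fun n hn g => by
    rw [Subgroup.mem_center_iff.mp (Subgroup.zpowers_le.mpr hz hn) g, mul_inv_cancel_right]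
    exact hn⟩
  have hp : IsPGroup p (Subgroup.zpowers z) :=
    IsPGroup.of_card (n := 1) (by rw [Nat.card_zpowers, hzp, pow_one])
  exact hp.le_sylow_of_normal P (Subgroup.mem_zpowers z)

end GroupTheory

section Involutions

variable {R V : Type*} [Ring R] [AddCommGroup V] [Module R V]

theorem Module.End.exists_apply_eq_self_of_mul_self_eq_one {τ : Module.End R V} (hτ : τ * τ = 1)
    (hne : τ ≠ -1) : ∃ a, τ a = a ∧ a ≠ 0 := by
  obtain ⟨v, hv⟩ : ∃ v, τ v ≠ -v := by
    by_contra! h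
    exact hne (LinearMap.ext h)
  refine ⟨τ v + v, ?_, fun h => hv (eq_neg_of_add_eq_zero_left h)⟩
  rw [map_add, ← Module.End.mul_apply, hτ, Module.End.one_apply, add_comm]

theorem Module.End.exists_apply_eq_neg_of_mul_self_eq_one {τ : Module.End R V} (hτ : τ * τ = 1)
    (hne : τ ≠ 1) : ∃ u, τ u = -u ∧ u ≠ 0 := by
  obtain ⟨v, hv⟩ : ∃ v, τ v ≠ v := by
    by_contra! h
    exact hne (LinearMap.ext h)
  refine ⟨τ v - v, ?_, fun h => hv (sub_eq_zero.mp h)⟩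
  rw [map_sub, ← Module.End.mul_apply, hτ, Module.End.one_apply, neg_sub]

end Involutions

section

variable {F V : Type*} [Field F] [AddCommGroup V] [Module F V]

theorem val_eq_neg_one_of_mem_center {H : Subgroup (V →ₗ[F] V)ˣ}
    (hirr : ∀ W : Submodule F V,
      (∀ h ∈ H, ∀ v ∈ W, (h : V →ₗ[F] V) v ∈ W) → W = ⊥ ∨ W = ⊤)
    {z : H} (hzZ : z ∈ Subgroup.center H) (hz2 : orderOf z = 2) : (z.1 : V →ₗ[F] V) = -1 := by
  set e : Module.End F V := (z.1 : V →ₗ[F] V)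
  have he : e * e = 1 := by
    rw [← Units.val_mul, ← pow_two, ← Subgroup.coe_pow, ← hz2, pow_orderOf_eq_one]
    rfl
  have hinv : ∀ h ∈ H, ∀ v ∈ LinearMap.ker (e - 1),
      (h : V →ₗ[F] V) v ∈ LinearMap.ker (e - 1) := by
    intro h hh v hv
    have hcomm : (h : V →ₗ[F] V) * e = e * h :=
      congrArg (fun x : H => (x.1 : V →ₗ[F] V)) (Subgroup.mem_center_iff.mp hzZ ⟨h, hh⟩)
    have : (e - 1) * h = h * (e - 1) := by rw [sub_mul, mul_sub, hcomm, one_mul, mul_one]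
    rw [LinearMap.mem_ker, ← Module.End.mul_apply, this, Module.End.mul_apply,
      LinearMap.mem_ker.mp hv, map_zero]
  rcases hirr _ hinv with hker | hker
  · refine LinearMap.ext fun v => eq_neg_of_add_eq_zero_left ?_
    rw [← Submodule.mem_bot F, ← hker, LinearMap.mem_ker, LinearMap.sub_apply, map_add,
      ← Module.End.mul_apply, he, Module.End.one_apply, Module.End.one_apply]
    abel
  · have hz1 : z = 1 := Subtype.ext (Units.ext (sub_eq_zero.mp (LinearMap.ker_eq_top.mp hker)))
    simp [hz1] at hz2

theorem not_mapsTo_neg_add {τ : V →ₗ[F] V} (h2 : (2 : F) ≠ 0) {a u : V} (ha : τ a = a)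
    (hu : τ u = -u) (ha0 : a ≠ 0) (hu0 : u ≠ 0) (w : V) :
    ¬ Set.MapsTo (fun x => -x + w) {0, a, u, -u} {0, a, u, -u} := by
  intro hw
  have key : ∀ y ∈ ({0, a, u, -u} : Set V), y = a ∨ τ y = -y := by
    rintro y (rfl | rfl | rfl | rfl) <;> simp [ha, hu]
  rcases key _ (hw (x := u) (by simp)) with hwu | hwu
  · obtain rfl : w = u + a := by linear_combination (norm := module) hwu
    rcases key _ (hw (x := 0) (by simp)) with hw0 | hw0
    · exact hu0 (by linear_combination (norm := module) hw0 - hwu)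
    · simp only [neg_zero, zero_add, map_add, ha, hu] at hw0
      exact smul_ne_zero h2 ha0 (by linear_combination (norm := module) hw0)
  · simp only [map_add, map_neg, hu, neg_neg] at hwu
    rcases key _ (hw (x := a) (by simp)) with hwa | hwa
    · obtain rfl : w = a + a := by linear_combination (norm := module) hwa
      simp only [map_add, ha] at hwu
      exact smul_ne_zero (mul_ne_zero h2 h2) ha0 (by linear_combination (norm := module) hwu)
    · simp only [map_add, map_neg, ha] at hwa
      exact smul_ne_zero h2 ha0 (by linear_combination (norm := module) hwu - hwa)

end

namespace affPerm

variable {F V : Type*} [Field F] [AddCommGroup V] [Module F V] {H : Subgroup (V →ₗ[F] V)ˣ}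

def ofLinear : H →* affPerm H :=
  ((MulAction.toPermHom (V →ₗ[F] V)ˣ V).comp H.subtype).codRestrict _
    fun h => ⟨h, h.2, 0, fun _ => (add_zero _).symm⟩

@[simp] theorem ofLinear_apply (h : H) (x : V) :
    (ofLinear h : Equiv.Perm V) x = (h.1 : V →ₗ[F] V) x :=
  rfl

theorem exists_linearPart (σ : affPerm H) :
    ∃ h : H, ∀ x, (σ : Equiv.Perm V) x = (h.1 : V →ₗ[F] V) x + (σ : Equiv.Perm V) 0 := by
  obtain ⟨h, hH, v, hσ⟩ := σ.2
  exact ⟨⟨h, hH⟩, fun x => by simp [hσ]⟩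

theorem eq_of_forall_apply_eq_add {σ : affPerm H} {h h' : H} {v v' : V}
    (hσ : ∀ x, (σ : Equiv.Perm V) x = (h.1 : V →ₗ[F] V) x + v)
    (hσ' : ∀ x, (σ : Equiv.Perm V) x = (h'.1 : V →ₗ[F] V) x + v') : h = h' := by
  have hv : v = v' := by simpa using (hσ 0).symm.trans (hσ' 0)
  exact Subtype.ext <| Units.ext <| LinearMap.ext fun x =>
    add_right_cancel ((hσ x).symm.trans (hv ▸ hσ' x))

noncomputable def linearPart : affPerm H →* H where
  toFun σ := (exists_linearPart σ).choose
  map_one' := eq_of_forall_apply_eq_add (exists_linearPart 1).choose_spec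
    (h' := 1) (v' := 0) fun x => by simp
  map_mul' σ τ := by
    refine eq_of_forall_apply_eq_add (exists_linearPart (σ * τ)).choose_spec
      (v' := ((exists_linearPart σ).choose.1 : V →ₗ[F] V) ((τ : Equiv.Perm V) 0) +
        (σ : Equiv.Perm V) 0) fun x => ?_
    change (σ : Equiv.Perm V) ((τ : Equiv.Perm V) x) = _
    rw [(exists_linearPart σ).choose_spec, (exists_linearPart τ).choose_spec x]
    simp [add_assoc]

theorem apply_eq_linearPart_add (σ : affPerm H) (x : V) :
    (σ : Equiv.Perm V) x = ((linearPart σ).1 : V →ₗ[F] V) x + (σ : Equiv.Perm V) 0 :=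
  (exists_linearPart σ).choose_spec x

theorem linearPart_eq_of_forall {σ : affPerm H} {h : H} {v : V}
    (hσ : ∀ x, (σ : Equiv.Perm V) x = (h.1 : V →ₗ[F] V) x + v) : linearPart σ = h :=
  eq_of_forall_apply_eq_add (apply_eq_linearPart_add σ) hσ

@[simp] theorem linearPart_ofLinear (h : H) : linearPart (ofLinear h) = h :=
  linearPart_eq_of_forall (v := 0) fun x => by simp

theorem ofLinear_injective : Function.Injective (ofLinear (H := H)) :=
  Function.LeftInverse.injective linearPart_ofLinear

theorem orderOf_dvd_card_stabilizer {Δ : Set V} (hΔ : Δ.Finite) {h : H}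
    (hh : Set.MapsTo (h.1 : V →ₗ[F] V) Δ Δ) :
    orderOf h ∣ Nat.card (MulAction.stabilizer (affPerm H) Δ) := by
  rw [← orderOf_injective _ ofLinear_injective]
  refine Subgroup.orderOf_dvd_natCard _ ?_
  rw [MulAction.mem_stabilizer_set_iff_smul_set_subset hΔ, Set.smul_set_subset_iff]
  exact fun x hx => hh hx

theorem pow_ringChar_eq_one {σ : affPerm H} (hσ : linearPart σ = 1) : σ ^ ringChar F = 1 := by
  obtain ⟨w, hw⟩ : ∃ w, (σ : Equiv.Perm V) 0 = w := ⟨_, rfl⟩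
  have hσ' : ⇑(σ : Equiv.Perm V) = (· + w) := by
    funext x; simpa [hσ, hw] using apply_eq_linearPart_add σ x
  ext x
  rw [Subgroup.coe_pow, Equiv.Perm.coe_pow, hσ', add_right_iterate, ← Nat.cast_smul_eq_nsmul F,
    ringChar.Nat.cast_ringChar, zero_smul]
  simp

theorem eq_one_of_linearPart_eq_one {σ : affPerm H} (hσ : linearPart σ = 1)
    (hcop : (orderOf σ).Coprime (ringChar F)) : σ = 1 :=
  orderOf_eq_one_iff.mp (hcop.eq_one_of_dvd (orderOf_dvd_of_pow_eq_one (pow_ringChar_eq_one hσ)))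

theorem exists_sylow_le_map_linearPart [Finite V] {q : ℕ} [Fact q.Prime]
    (hq : q.Coprime (ringChar F)) (P : Sylow q H) (S : Subgroup (affPerm H))
    (hPS : Nat.card P ∣ Nat.card S) :
    ∃ P' : Sylow q H, (P' : Subgroup H) ≤ S.map linearPart := by
  have : Finite H := Finite.of_injective _ ofLinear_injective
  obtain ⟨Q, hQ⟩ := Sylow.exists_subgroup_card_pow_prime q (P.card_eq_multiplicity ▸ hPS)
  let φ := (linearPart.comp S.subtype).comp Q.subtype
  have hφ : Function.Injective φ := by
    refine (injective_iff_map_eq_one φ).mpr fun x hx => ?_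
    obtain ⟨k, hk⟩ := IsPGroup.iff_orderOf.mp (IsPGroup.of_card hQ) x
    have hx' : orderOf ((x : S) : affPerm H) = q ^ k := by
      rw [Subgroup.orderOf_coe, Subgroup.orderOf_coe, hk]
    exact Subtype.ext (Subtype.ext (eq_one_of_linearPart_eq_one hx (hx' ▸ hq.pow_left k)))
  have hcard : Nat.card φ.range = Nat.card P := by
    rw [← Nat.card_congr (MonoidHom.ofInjective hφ).toEquiv, hQ, P.card_eq_multiplicity]
  obtain ⟨P', hP'⟩ := (IsPGroup.of_card (hcard.trans P.card_eq_multiplicity)).exists_le_sylow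
  have hP'eq : φ.range = P' := Subgroup.eq_of_le_of_card_ge hP' <| by
    rw [hcard, Sylow.card_eq_multiplicity, Sylow.card_eq_multiplicity]
  refine ⟨P', hP'eq ▸ ?_⟩
  calc φ.range = Q.map (linearPart.comp S.subtype) := by
        rw [MonoidHom.range_comp, Subgroup.range_subtype]
    _ ≤ (linearPart.comp S.subtype).range := Subgroup.map_le_range _ _
    _ = S.map linearPart := by rw [MonoidHom.range_comp, Subgroup.range_subtype]

theorem not_card_sylow_dvd_card_stabilizer [Finite V] (hchar : Odd (ringChar F)) (P : Sylow 2 H)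
    {z : H} (hz : ∀ P : Sylow 2 H, z ∈ P) (hz_neg : (z.1 : V →ₗ[F] V) = -1)
    {τ : V →ₗ[F] V} {a u : V} (ha : τ a = a) (hu : τ u = -u) (ha0 : a ≠ 0)
    (hu0 : u ≠ 0) :
    ¬ Nat.card P ∣ Nat.card (MulAction.stabilizer (affPerm H) ({0, a, u, -u} : Set V)) := by
  intro hP
  have h2 : (2 : F) ≠ 0 := Ring.two_ne_zero fun h => (by decide : ¬ Odd 2) (h ▸ hchar)
  obtain ⟨P', hP'⟩ := exists_sylow_le_map_linearPart (Nat.coprime_two_left.mpr hchar) P _ hP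
  obtain ⟨σ, hσ, hσz⟩ := hP' (hz P')
  refine not_mapsTo_neg_add h2 ha hu ha0 hu0 ((σ : Equiv.Perm V) 0) fun x hx => ?_
  have := (MulAction.mem_stabilizer_set.mp hσ x).mpr hx
  rwa [Subgroup.smul_def, Equiv.Perm.smul_def, apply_eq_linearPart_add, hσz, hz_neg,
    LinearMap.neg_apply, Module.End.one_apply] at this

end affPerm

theorem affine_metacyclic_two_moderate_general
    (F V : Type*) [Field F] [Finite F] (hchar : Odd (ringChar F))
    [AddCommGroup V] [Module F V] [FiniteDimensional F V]
    (H : Subgroup (V →ₗ[F] V)ˣ)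
    -- (i) V is an irreducible H-module
    (hirr : Nontrivial V ∧ ∀ W : Submodule F V,
      (∀ h ∈ H, ∀ v ∈ W, (h : V →ₗ[F] V) v ∈ W) → W = ⊥ ∨ W = ⊤)
    -- (ii) H is metacyclic: a normal cyclic subgroup C with H/C cyclic
    (hmeta : ∃ C : Subgroup H, C.Normal ∧ IsCyclic C ∧
      ∃ g : H, ∀ x : H, ∃ n : ℤ, x⁻¹ * g ^ n ∈ C)
    -- (iii) the Sylow 2-subgroups of H are elementary abelian of order 4
    (hSyl : ∀ P : Sylow 2 H, Nat.card P = 4 ∧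
      (∀ x y : P, x * y = y * x) ∧ ∀ x : P, x ^ 2 = 1) :
    IsPModerate 2 (affPerm H) V := by
  have : Finite V := Module.finite_of_finite F
  have : Finite H := Finite.of_injective _ affPerm.ofLinear_injective
  have : Fact (Nat.Prime 2) := ⟨Nat.prime_two⟩
  obtain ⟨C, hC, hCcyc, g, hg⟩ := hmeta
  have := QuotientGroup.isCyclic_of_forall_exists_zpow g hg
  obtain ⟨P⟩ : Nonempty (Sylow 2 H) := inferInstance
  obtain ⟨hP4, -, hPsq⟩ := hSyl P
  obtain ⟨z, hzP, hzZ, hz2⟩ := exists_mem_center_orderOf_eq_two (C := C) (by omega) hPsq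
  have hz_neg := val_eq_neg_one_of_mem_center hirr.2 hzZ hz2
  obtain ⟨t, htP, ht1, htz⟩ := Subgroup.exists_mem_ne_ne (P := P) (by omega) 1 z
  have ht2 : t ^ 2 = 1 := congrArg Subtype.val (hPsq ⟨t, htP⟩)
  have htt : (t.1 : V →ₗ[F] V) * t.1 = 1 := by
    rw [← Units.val_mul, ← pow_two, ← Subgroup.coe_pow, ht2]
    rfl
  obtain ⟨a, ha, ha0⟩ := Module.End.exists_apply_eq_self_of_mul_self_eq_one htt
    fun h => htz (Subtype.ext (Units.ext (h.trans hz_neg.symm)))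
  obtain ⟨u, hu, hu0⟩ := Module.End.exists_apply_eq_neg_of_mul_self_eq_one htt
    fun h => ht1 (Subtype.ext (Units.ext h))
  refine isPModerate_of_dvd (k := 2) Nat.prime_two {0, a, u, -u} ?_ ?_ ?_
  · exact orderOf_eq_prime ht2 ht1 ▸ affPerm.orderOf_dvd_card_stabilizer (Set.toFinite _)
      (by rintro x (rfl | rfl | rfl | rfl) <;> simp [ha, hu])
  · exact fun h4 => affPerm.not_card_sylow_dvd_card_stabilizer hchar P
      (Sylow.mem_of_mem_center hzZ hz2) hz_neg ha hu ha0 hu0 (by rwa [hP4])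
  · calc 2 ^ 2 = Nat.card P := hP4.symm
      _ ∣ Nat.card H := Subgroup.card_subgroup_dvd_card (P : Subgroup H)
      _ ∣ _ := Subgroup.card_dvd_of_injective _ affPerm.ofLinear_injective

theorem affine_metacyclic_two_moderate
    (F V : Type*) [Field F] [Finite F] (hchar : Odd (ringChar F))
    [AddCommGroup V] [Module F V] [FiniteDimensional F V]
    (H : Subgroup (V →ₗ[F] V)ˣ)
    -- (i) V is an irreducible H-module
    (hirr : Nontrivial V ∧ ∀ W : Submodule F V,
      (∀ h ∈ H, ∀ v ∈ W, (h : V →ₗ[F] V) v ∈ W) → W = ⊥ ∨ W = ⊤)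
    -- (ii) H is metacyclic: a normal cyclic subgroup C with H/C cyclic
    (hmeta : ∃ C : Subgroup H, C.Normal ∧ IsCyclic C ∧
      ∃ g : H, ∀ x : H, ∃ n : ℤ, x⁻¹ * g ^ n ∈ C)
    -- (iii) the Sylow 2-subgroups of H are elementary abelian of order 4
    (hSyl : ∀ P : Sylow 2 H, Nat.card P = 4 ∧
      (∀ x y : P, x * y = y * x) ∧ ∀ x : P, x ^ 2 = 1)
    -- (iv) H has no proper normal subgroup of odd index
    (hO2 : ∀ N : Subgroup H, N.Normal → Odd N.index → N = ⊤) :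
    IsPModerate 2 (affPerm H) V :=
  affine_metacyclic_two_moderate_general F V hchar H hirr hmeta hSyl
end

section
/- Let K = GF(8) be the field with 8 elements and let J be the group of all permutations of K of the form x ↦ a·x^{2^i} + b with a ∈ K^×, b ∈ K, and i ∈ {0, 1, 2}. Let J × J act on K ⊕ K coordinatewise. Then every subgroup G of J × J whose order is divisible by 9 is 3-moderate as a permutation group on K ⊕ K; that is, there exists a subset Δ of K ⊕ K whose setwise stabilizer Stab_G(Δ) satisfies 1 < |Stab_G(Δ)|₃ < |G|₃. -/
open Pointwise

/-!
A Sylow `3`-subgroup `P` of `G` has order `9`. The nonidentity elements of `J = AΓL(1, 8)` fix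
at most two of the `8` points of `𝔽₈`, so `J` has no `3`-subgroup of order `9`: both projections
of `P` have order `3`, and `P` contains `σ = (g, h)` with `g` and `h` of order `3`. For `z` moved
in both coordinates, `Δ = {z, σ z, σ² z}` is stabilized by `σ`, while only the identity of `J × J`
fixes `Δ` pointwise; hence `Stab_G(Δ)` embeds in `Sym(Δ) ≅ S₃` and `|Stab_G(Δ)|₃ = 3 < 9 ≤ |G|₃`.
-/

open Equiv MulAction

local notation "𝔽₈" => GaloisField 2 3

theorem GaloisField.natCard_two_three : Nat.card 𝔽₈ = 8 :=
  GaloisField.card 2 3 (by norm_num)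

theorem GaloisField.pow_eight (x : 𝔽₈) : x ^ 8 = x := by
  let := Fintype.ofFinite 𝔽₈
  rw [← GaloisField.natCard_two_three, ← Fintype.card_eq_nat_card, FiniteField.pow_card]

theorem GaloisField.eq_zero_or_one_of_pow_two_pow_eq_self {x : 𝔽₈} {i : Fin 3} (hi : i ≠ 0)
    (hx : x ^ 2 ^ (i : ℕ) = x) : x = 0 ∨ x = 1 := by
  have hx2 : x ^ 2 = x := by
    fin_cases i
    · exact absurd rfl hi
    · simpa using hx
    · calc x ^ 2 = (x ^ 8) ^ 2 := by rw [GaloisField.pow_eight]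
        _ = (x ^ 4) ^ 4 := by ring
        _ = x := by norm_num at hx; rw [hx, hx]
  have : x * (x - 1) = 0 := by linear_combination hx2
  rcases mul_eq_zero.mp this with h | h
  · exact .inl h
  · exact .inr (sub_eq_zero.mp h)

theorem GaloisField.apply_eq_self_of_fixes_three {a b : 𝔽₈} {i : Fin 3}
    {f : 𝔽₈ → 𝔽₈} (hf : ∀ x, f x = a * x ^ 2 ^ (i : ℕ) + b) {u v w : 𝔽₈}
    (hu : f u = u) (hv : f v = v) (hw : f w = w) (huv : u ≠ v) (huw : u ≠ w) (hvw : v ≠ w) :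
    ∀ x, f x = x := by
  have hdiff : ∀ {y y'}, f y = y → f y' = y' → a * (y - y') ^ 2 ^ (i : ℕ) = y - y' := by
    intro y y' hy hy'
    rw [hf] at hy hy'
    rw [sub_pow_char_pow]
    linear_combination hy - hy'
  have ht := hdiff hu hv
  have hs := hdiff hu hw
  have ht0 : u - v ≠ 0 := sub_ne_zero.mpr huv
  have hs0 : u - w ≠ 0 := sub_ne_zero.mpr huw
  by_cases hi : i = 0
  · subst hi
    simp only [Fin.val_zero, pow_zero, pow_one] at hf ht
    have ha : a = 1 := mul_right_cancel₀ ht0 (by rw [ht, one_mul])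
    have hb : b = 0 := by rw [hf, ha] at hu; linear_combination hu
    intro x
    rw [hf, ha, hb, one_mul, add_zero]
  · exfalso
    have hfix : ((u - v) / (u - w)) ^ 2 ^ (i : ℕ) = (u - v) / (u - w) := by
      have hq0 : (u - w) ^ 2 ^ (i : ℕ) ≠ 0 := pow_ne_zero _ hs0
      rw [div_pow, div_eq_div_iff hq0 hs0]
      linear_combination (u - w) ^ 2 ^ (i : ℕ) * ht - (u - v) ^ 2 ^ (i : ℕ) * hs
    rcases GaloisField.eq_zero_or_one_of_pow_two_pow_eq_self hi hfix with h | h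
    · exact ht0 (by simpa [hs0] using h)
    · exact hvw (by simpa using (div_eq_one_iff_eq hs0).mp h)

namespace Subgroup

variable {α : Type*}

def FixesAtMostTwoPoints (J : Subgroup (Perm α)) : Prop :=
  ∀ g ∈ J, ∀ u v w : α, g u = u → g v = v → g w = w → u ≠ v → u ≠ w → v ≠ w →
    g = 1

theorem FixesAtMostTwoPoints.mono {J Q : Subgroup (Perm α)} (hJ : J.FixesAtMostTwoPoints)
    (hQ : Q ≤ J) : Q.FixesAtMostTwoPoints :=
  fun g hg => hJ g (hQ hg)

/-- Since `|α| mod p ≥ 2`, the `p`-group `Q` has two common fixed points. A point `z` moved by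
`Q` has an orbit of size at most `p` (a power of `p` below `p²`), so if `|Q| > p` the stabilizer
of `z` contains a nontrivial element fixing three points. -/
theorem FixesAtMostTwoPoints.card_le_of_isPGroup [Finite α] {p : ℕ} [hp : Fact p.Prime]
    {Q : Subgroup (Perm α)} (hfix : Q.FixesAtMostTwoPoints) (hQ : IsPGroup p Q)
    (hα : Nat.card α < p ^ 2) (hαp : 2 ≤ Nat.card α % p) : Nat.card Q ≤ p := by
  by_contra! hQp
  obtain ⟨u, v, huv⟩ : ∃ u v : fixedPoints Q α, u ≠ v := by
    have hmod := hQ.card_modEq_card_fixedPoints α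
    have : 1 < Nat.card (fixedPoints Q α) := by
      have := Nat.mod_le (Nat.card (fixedPoints Q α)) p
      unfold Nat.ModEq at hmod
      omega
    exact Finite.one_lt_card_iff_nontrivial.mp this |>.exists_pair_ne
  obtain ⟨q, hq⟩ : ∃ q : Q, q ≠ 1 := by
    have := Finite.one_lt_card_iff_nontrivial.mp (hp.out.one_lt.trans hQp)
    exact exists_ne 1
  obtain ⟨z, hz⟩ : ∃ z : α, q • z ≠ z := by
    by_contra! h
    exact hq (eq_of_smul_eq_smul fun z => by rw [h, one_smul])
  have horbit : Nat.card (orbit Q z) ≤ p := by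
    obtain ⟨k, hk⟩ := hQ.card_orbit z
    have : p ^ k < p ^ 2 := hk ▸ (Finite.card_subtype_le _).trans_lt hα
    have hk1 : k ≤ 1 := by have := (Nat.pow_lt_pow_iff_right hp.out.one_lt).mp this; omega
    simpa [hk] using Nat.pow_le_pow_right hp.out.pos hk1
  obtain ⟨r, hr⟩ : ∃ r : stabilizer Q z, r ≠ 1 := by
    have hcard := (stabilizer Q z).index_mul_card
    rw [index_stabilizer, ← Nat.card_coe_set_eq] at hcard
    have : 1 < Nat.card (stabilizer Q z) := by nlinarith
    have := Finite.one_lt_card_iff_nontrivial.mp this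
    exact exists_ne 1
  have hzu : z ≠ u := fun h => hz (h ▸ u.2 q)
  have hzv : z ≠ v := fun h => hz (h ▸ v.2 q)
  have := hfix _ (r : Q).2 u v z (u.2 r) (v.2 r) r.2 (Subtype.coe_ne_coe.mpr huv)
    (Ne.symm hzu) (Ne.symm hzv)
  exact hr (Subtype.ext (Subtype.ext this))

theorem exists_mem_orderOf_eq_of_card_eq_prime {A : Type*} [Group A] {p : ℕ} [Fact p.Prime]
    {B : Subgroup A} (hB : Nat.card B = p) : ∃ g ∈ B, orderOf g = p := by
  have : Finite B := Nat.finite_of_card_ne_zero (hB ▸ (Fact.out : p.Prime).ne_zero)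
  obtain ⟨g, hg⟩ := exists_prime_orderOf_dvd_card' (G := B) p (by rw [hB])
  exact ⟨g, g.2, by rw [orderOf_coe, hg]⟩

/-- A subgroup `P ≤ H` of order `p²` lies in the product of its two projections, which are
`p`-subgroups of `J₁` and `J₂`; counting forces both to have order `p` and `P` to be their
product. -/
theorem exists_mk_mem_orderOf_eq_of_sq_dvd_card {A₁ A₂ : Type*} [Group A₁] [Group A₂]
    [Finite A₁] [Finite A₂] {p : ℕ} [Fact p.Prime] {J₁ : Subgroup A₁}
    {J₂ : Subgroup A₂} (h₁ : ∀ Q ≤ J₁, IsPGroup p Q → Nat.card Q ≤ p)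
    (h₂ : ∀ Q ≤ J₂, IsPGroup p Q → Nat.card Q ≤ p)
    {H : Subgroup (A₁ × A₂)} (hH : H ≤ J₁.prod J₂) (hpH : p ^ 2 ∣ Nat.card H) :
    ∃ g h, orderOf g = p ∧ orderOf h = p ∧ (g, h) ∈ H := by
  obtain ⟨P₀, hP₀⟩ := Sylow.exists_subgroup_card_pow_prime p hpH
  set P := P₀.map H.subtype
  set B₁ := P.map (MonoidHom.fst A₁ A₂)
  set B₂ := P.map (MonoidHom.snd A₁ A₂)
  have hPcard : Nat.card P = p ^ 2 := by rw [card_map_of_injective H.subtype_injective, hP₀]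
  have hPB : P ≤ B₁.prod B₂ := le_prod_iff.mpr ⟨le_rfl, le_rfl⟩
  have hBJ : B₁ ≤ J₁ ∧ B₂ ≤ J₂ := le_prod_iff.mp ((map_subtype_le P₀).trans hH)
  have hB₁ := h₁ B₁ hBJ.1 ((IsPGroup.of_card hPcard).map _)
  have hB₂ := h₂ B₂ hBJ.2 ((IsPGroup.of_card hPcard).map _)
  have hcard : Nat.card (B₁.prod B₂) = Nat.card B₁ * Nat.card B₂ := by
    rw [Nat.card_congr (prodEquiv B₁ B₂).toEquiv, Nat.card_prod]
  have hle : p ^ 2 ≤ Nat.card B₁ * Nat.card B₂ := hcard ▸ hPcard ▸ card_le_of_le hPB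
  obtain ⟨g, hgB, hg⟩ :=
    exists_mem_orderOf_eq_of_card_eq_prime (p := p) (B := B₁) (by nlinarith)
  obtain ⟨h, hhB, hh⟩ :=
    exists_mem_orderOf_eq_of_card_eq_prime (p := p) (B := B₂) (by nlinarith)
  have hPeq : P = B₁.prod B₂ := eq_of_le_of_card_ge hPB (by rw [hcard, hPcard]; nlinarith)
  have hgh : (g, h) ∈ P := hPeq ▸ mem_prod.mpr ⟨hgB, hhB⟩
  exact ⟨g, h, hg, hh, map_subtype_le P₀ hgh⟩

end Subgroup

namespace Equiv.Perm

variable {α β : Type*}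

def prodCongrHom : Perm α × Perm β →* Perm (α × β) where
  toFun gh := gh.1.prodCongr gh.2
  map_one' := rfl
  map_mul' _ _ := rfl

@[simp]
theorem prodCongrHom_apply (g : Perm α) (h : Perm β) (z : α × β) :
    prodCongrHom (g, h) z = (g z.1, h z.2) :=
  rfl

theorem prodCongrHom_injective [Nonempty α] [Nonempty β] :
    Function.Injective (prodCongrHom : Perm α × Perm β →* Perm (α × β)) := by
  rintro ⟨g, h⟩ ⟨g', h'⟩ hgh
  obtain ⟨x₀⟩ := ‹Nonempty α›
  obtain ⟨y₀⟩ := ‹Nonempty β›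
  refine Prod.ext (Equiv.ext fun x => ?_) (Equiv.ext fun y => ?_)
  · exact congrArg Prod.fst (Equiv.congr_fun hgh (x, y₀))
  · exact congrArg Prod.snd (Equiv.congr_fun hgh (x₀, y))

theorem exists_apply_ne_of_ne_one {g : Perm α} (hg : g ≠ 1) : ∃ x, g x ≠ x := by
  by_contra! h
  exact hg (Equiv.ext h)

theorem apply_apply_apply_of_pow_three {g : Perm α} (hg : g ^ 3 = 1) (x : α) :
    g (g (g x)) = x := by
  simpa [pow_succ, Perm.mul_apply] using Equiv.congr_fun hg x

theorem apply_apply_ne_of_pow_three {g : Perm α} (hg : g ^ 3 = 1) {x : α} (hx : g x ≠ x) :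
    g (g x) ≠ x ∧ g (g x) ≠ g x :=
  ⟨fun h => hx ((congrArg g h).symm.trans (apply_apply_apply_of_pow_three hg x)),
    fun h => hx (g.injective h)⟩

end Equiv.Perm

open Equiv.Perm

theorem MulAction.card_stabilizer_dvd_factorial {G Ω : Type*} [Group G] [MulAction G Ω]
    {Δ : Set Ω} [Finite Δ] (hΔ : ∀ g : G, (∀ x ∈ Δ, g • x = x) → g = 1) :
    Nat.card (stabilizer G Δ) ∣ (Nat.card Δ).factorial := by
  rw [← Nat.card_perm]
  refine Subgroup.card_dvd_of_injective (toPermHom (stabilizer G Δ) Δ) ?_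
  rw [injective_iff_map_eq_one]
  intro g hg
  exact Subtype.ext (hΔ g fun x hx => congrArg Subtype.val (Equiv.congr_fun hg ⟨x, hx⟩))

theorem exists_three_dvd_card_stabilizer_dvd_six {α β : Type*} {J₁ : Subgroup (Perm α)}
    {J₂ : Subgroup (Perm β)} (h₁ : J₁.FixesAtMostTwoPoints)
    (h₂ : J₂.FixesAtMostTwoPoints) {G : Subgroup (Perm (α × β))}
    (hG : G ≤ (J₁.prod J₂).map prodCongrHom) {g : Perm α} {h : Perm β} (hg : orderOf g = 3)
    (hh : orderOf h = 3) (hgh : prodCongrHom (g, h) ∈ G) :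
    ∃ Δ : Set (α × β), 3 ∣ Nat.card (stabilizer G Δ) ∧ Nat.card (stabilizer G Δ) ∣ 6 := by
  have hg3 : g ^ 3 = 1 := hg ▸ pow_orderOf_eq_one g
  have hh3 : h ^ 3 = 1 := hh ▸ pow_orderOf_eq_one h
  obtain ⟨x, hx⟩ := exists_apply_ne_of_ne_one (g := g) (by rintro rfl; simp at hg)
  obtain ⟨y, hy⟩ := exists_apply_ne_of_ne_one (g := h) (by rintro rfl; simp at hh)
  obtain ⟨hx₂, hx₂'⟩ := apply_apply_ne_of_pow_three hg3 hx
  obtain ⟨hy₂, hy₂'⟩ := apply_apply_ne_of_pow_three hh3 hy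
  set σ : G := ⟨_, hgh⟩
  set Δ : Set (α × β) := {(x, y), (g x, h y), (g (g x), h (h y))}
  have hσ3 : σ ^ 3 = 1 := by
    ext z : 2
    simp [σ, pow_succ, apply_apply_apply_of_pow_three hg3, apply_apply_apply_of_pow_three hh3]
  have hσΔ : σ ∈ stabilizer G Δ := by
    rw [mem_stabilizer_set' (Set.toFinite Δ)]
    rintro b (rfl | rfl | rfl) <;>
      simp [Δ, σ, apply_apply_apply_of_pow_three hg3, apply_apply_apply_of_pow_three hh3]
  have hfix : ∀ τ : G, (∀ z ∈ Δ, τ • z = z) → τ = 1 := by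
    intro τ hτ
    obtain ⟨⟨g', h'⟩, hgh', hτ'⟩ := hG τ.2
    have hfix' : ∀ z ∈ Δ, prodCongrHom (g', h') z = z := by
      intro z hz
      rw [hτ']
      exact hτ z hz
    simp only [Δ, Set.mem_insert_iff, Set.mem_singleton_iff, forall_eq_or_imp, forall_eq,
      prodCongrHom_apply, Prod.mk.injEq] at hfix'
    obtain ⟨⟨hx0, hy0⟩, ⟨hx1, hy1⟩, ⟨hx2, hy2⟩⟩ := hfix'
    have hg' := h₁ g' hgh'.1 _ _ _ hx0 hx1 hx2 (Ne.symm hx) (Ne.symm hx₂) (Ne.symm hx₂')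
    have hh' := h₂ h' hgh'.2 _ _ _ hy0 hy1 hy2 (Ne.symm hy) (Ne.symm hy₂) (Ne.symm hy₂')
    ext z : 2
    rw [← hτ', hg', hh']
    rfl
  refine ⟨Δ, ?_, ?_⟩
  · have : orderOf (⟨σ, hσΔ⟩ : stabilizer G Δ) = 3 := by
      refine orderOf_eq_prime (Subtype.ext hσ3) fun h1 => hx ?_
      simpa [σ] using congrArg Prod.fst (Equiv.congr_fun (congrArg (·.1.1) h1) (x, y))
    exact this ▸ orderOf_dvd_natCard _
  · refine (card_stabilizer_dvd_factorial hfix).trans (Nat.factorial_dvd_factorial (n := 3) ?_)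
    rw [Nat.card_coe_set_eq]
    exact (Set.ncard_insert_le _ _).trans (Nat.succ_le_succ ((Set.ncard_insert_le _ _).trans
      (by rw [Set.ncard_singleton])))

theorem pPart_eq_self_of_dvd_of_not_sq_dvd {p n : ℕ} (hp : p.Prime) (h1 : p ∣ n)
    (h2 : ¬ p ^ 2 ∣ n) : pPart p n = p := by
  have hn : n ≠ 0 := by rintro rfl; exact h2 (dvd_zero _)
  have hle := (hp.dvd_iff_one_le_factorization hn).mp h1
  have hlt := (hp.pow_dvd_iff_le_factorization hn).not.mp h2
  rw [pPart, show n.factorization p = 1 by omega, pow_one]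

theorem pow_le_pPart_of_dvd {p n k : ℕ} (hp : p.Prime) (hn : n ≠ 0) (h : p ^ k ∣ n) :
    p ^ k ≤ pPart p n :=
  Nat.pow_le_pow_right hp.pos ((hp.pow_dvd_iff_le_factorization hn).mp h)

theorem isPModerate_three_of_le_map_prod {α β : Type*} [Finite α] [Finite β]
    {J₁ : Subgroup (Perm α)} {J₂ : Subgroup (Perm β)} (h₁ : J₁.FixesAtMostTwoPoints)
    (h₂ : J₂.FixesAtMostTwoPoints) (hα : Nat.card α < 9) (hα3 : Nat.card α % 3 = 2)
    (hβ : Nat.card β < 9) (hβ3 : Nat.card β % 3 = 2) {G : Subgroup (Perm (α × β))}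
    (hG : G ≤ (J₁.prod J₂).map prodCongrHom) (h9 : 9 ∣ Nat.card G) :
    IsPModerate 3 G (α × β) := by
  have : Nonempty α := Nat.card_pos_iff.mp (by omega) |>.1
  have : Nonempty β := Nat.card_pos_iff.mp (by omega) |>.1
  have : Fact (Nat.Prime 3) := ⟨Nat.prime_three⟩
  have hp₁ : ∀ Q ≤ J₁, IsPGroup 3 Q → Nat.card Q ≤ 3 := fun Q hQ hQ3 =>
    (h₁.mono hQ).card_le_of_isPGroup hQ3 hα (by omega)
  have hp₂ : ∀ Q ≤ J₂, IsPGroup 3 Q → Nat.card Q ≤ 3 := fun Q hQ hQ3 =>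
    (h₂.mono hQ).card_le_of_isPGroup hQ3 hβ (by omega)
  have hGJ : G.comap prodCongrHom ≤ J₁.prod J₂ := by
    simpa [Subgroup.comap_map_eq_self_of_injective prodCongrHom_injective] using
      Subgroup.comap_mono (f := prodCongrHom) hG
  have hcard : Nat.card (G.comap prodCongrHom) = Nat.card G := by
    rw [← Subgroup.card_map_of_injective prodCongrHom_injective,
      Subgroup.map_comap_eq_self (hG.trans (Subgroup.map_le_range _ _))]
  obtain ⟨g, h, hg, hh, hgh⟩ :=
    Subgroup.exists_mk_mem_orderOf_eq_of_sq_dvd_card hp₁ hp₂ hGJ (hcard ▸ h9)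
  obtain ⟨Δ, h3, h6⟩ := exists_three_dvd_card_stabilizer_dvd_six h₁ h₂ hG hg hh hgh
  have hΔ := pPart_eq_self_of_dvd_of_not_sq_dvd Nat.prime_three h3
    fun h9' => absurd (h9'.trans h6) (by norm_num)
  have hG9 := pow_le_pPart_of_dvd (k := 2) Nat.prime_three Nat.card_pos.ne' h9
  exact ⟨Δ, by rw [hΔ]; norm_num, by rw [hΔ]; omega⟩

/-- Every subgroup of `J × J` (acting coordinatewise on `GF(8) ⊕ GF(8)`, where `J` is
the affine semilinear group of `GF(8)`) whose order is divisible by 9 is 3-moderate. -/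
theorem subgroup_of_JxJ_three_moderate
    (J : Subgroup (Equiv.Perm (GaloisField 2 3)))
    -- J consists of all maps x ↦ a·x^(2^i) + b with a ≠ 0, i ∈ {0, 1, 2}
    (hJ : ∀ σ : Equiv.Perm (GaloisField 2 3), σ ∈ J ↔
      ∃ (a : (GaloisField 2 3)ˣ) (b : GaloisField 2 3) (i : Fin 3),
        ∀ x : GaloisField 2 3, σ x = (a : GaloisField 2 3) * x ^ (2 ^ (i : ℕ)) + b)
    (G : Subgroup (Equiv.Perm (GaloisField 2 3 × GaloisField 2 3)))
    -- G is a subgroup of J × J acting coordinatewise on K ⊕ K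
    (hG : ∀ σ ∈ G, ∃ g ∈ J, ∃ h ∈ J,
      ∀ z : GaloisField 2 3 × GaloisField 2 3, σ z = (g z.1, h z.2))
    (h9 : 9 ∣ Nat.card G) :
    IsPModerate 3 G (GaloisField 2 3 × GaloisField 2 3) := by
  have hJ₂ : J.FixesAtMostTwoPoints := by
    intro g hg u v w hu hv hw huv huw hvw
    obtain ⟨a, b, i, hgab⟩ := (hJ g).mp hg
    exact Equiv.ext (GaloisField.apply_eq_self_of_fixes_three hgab hu hv hw huv huw hvw)
  have hGJ : G ≤ (J.prod J).map prodCongrHom := by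
    intro σ hσ
    obtain ⟨g, hg, h, hh, hσgh⟩ := hG σ hσ
    exact ⟨(g, h), ⟨hg, hh⟩, Equiv.ext fun z => (hσgh z).symm⟩
  have h8 := GaloisField.natCard_two_three
  exact isPModerate_three_of_le_map_prod hJ₂ hJ₂ (by omega) (by omega) (by omega) (by omega)
    hGJ h9
end
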